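/- arXiv:2210.06337 — 2 statements merged into one kernel-verified Lean document; each statement's English description precedes it below -/
import Mathlib

section
/- (Generalized Bihari–LaSalle inequality, special case) Let $u:[t_0,T]\to[0,\infty)$ be continuous, $\beta:[t_0,T]\to[0,\infty)$ continuous, $c\ge 0$, and $g:[0,\infty)\to(0,\infty)$ strictly increasing and continuous. Suppose $u(t)\le c+\int_{t_0}^t\beta(s)g(u(s))\,ds$ for all $t\in[t_0,T]$. Define $\mathcal{G}(r)=\int_{c}^{r}\frac{ds}{g(s)}$. Then for all $t$ such that $\int_{t_0}^t\beta(s)\,ds$ lies in the range of $\mathcal{G}$, one has $u(t)\le\mathcal{G}^{-1}\big(\int_{t_0}^t\beta(s)\,ds\big)$. -/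
open intervalIntegral

theorem bihari_lasalle (t0 T c : ℝ) (hT : t0 ≤ T) (hc : 0 ≤ c)
    (u β g : ℝ → ℝ)
    (hu : ContinuousOn u (Set.Icc t0 T)) (hu0 : ∀ t ∈ Set.Icc t0 T, 0 ≤ u t)
    (hβ : ContinuousOn β (Set.Icc t0 T)) (hβ0 : ∀ t ∈ Set.Icc t0 T, 0 ≤ β t)
    (hg : StrictMonoOn g (Set.Ici 0)) (hgc : Continuous g)
    (hgpos : ∀ s : ℝ, 0 ≤ s → 0 < g s)
    (hineq : ∀ t ∈ Set.Icc t0 T, u t ≤ c + ∫ s in t0..t, β s * g (u s)) :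
    ∀ t ∈ Set.Icc t0 T, ∀ r : ℝ, c ≤ r →
      (∫ s in c..r, 1 / g s) = (∫ s in t0..t, β s) → u t ≤ r := by
  -- auxiliary modified reciprocal, continuous everywhere
  set h : ℝ → ℝ := fun s => (g (max s 0))⁻¹ with hh
  have hmaxpos : ∀ s : ℝ, 0 < g (max s 0) := fun s => hgpos _ (le_max_right _ _)
  have hhc : Continuous h := by
    apply Continuous.inv₀ (hgc.comp (continuous_id.max continuous_const))
    exact fun s => (hmaxpos s).ne'
  have hhpos : ∀ s, 0 < h s := fun s => inv_pos.2 (hmaxpos s)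
  set Gt : ℝ → ℝ := fun x => ∫ s in c..x, h s with hGt
  -- Gt is strictly monotone
  have hGtmono : StrictMono Gt := by
    intro x y hxy
    have hadd : Gt x + ∫ s in x..y, h s = Gt y :=
      integral_add_adjacent_intervals (hhc.intervalIntegrable _ _) (hhc.intervalIntegrable _ _)
    have hpos : 0 < ∫ s in x..y, h s := by
      apply intervalIntegral.intervalIntegral_pos_of_pos
        (hhc.intervalIntegrable _ _) (fun s => hhpos s) hxy
    linarith
  -- the integrand of the assumed inequality
  set f : ℝ → ℝ := fun s => β s * g (u s) with hf
  have hfc : ContinuousOn f (Set.Icc t0 T) := hβ.mul (hgc.comp_continuousOn hu)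
  have hfint : ∀ t ∈ Set.Icc t0 T, IntervalIntegrable f MeasureTheory.volume t0 t := by
    intro t ht
    apply ContinuousOn.intervalIntegrable
    apply hfc.mono
    rw [Set.uIcc_of_le ht.1]
    exact Set.Icc_subset_Icc le_rfl ht.2
  set v : ℝ → ℝ := fun t => c + ∫ s in t0..t, f s with hv
  have hf0 : ∀ s ∈ Set.Icc t0 T, 0 ≤ f s := fun s hs =>
    mul_nonneg (hβ0 s hs) (hgpos _ (hu0 s hs)).le
  have hvc : ∀ t ∈ Set.Icc t0 T, c ≤ v t := by
    intro t ht
    have : 0 ≤ ∫ s in t0..t, f s := by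
      apply intervalIntegral.integral_nonneg ht.1
      intro s hs
      exact hf0 s ⟨hs.1, hs.2.trans ht.2⟩
    simpa [hv] using this
  have huv : ∀ t ∈ Set.Icc t0 T, u t ≤ v t := fun t ht => hineq t ht
  -- ψ is monotone on [t0, T]
  set ψ : ℝ → ℝ := fun t => (∫ s in t0..t, β s) - Gt (v t) with hψ
  have hβint : ∀ t ∈ Set.Icc t0 T, IntervalIntegrable β MeasureTheory.volume t0 t := by
    intro t ht
    apply ContinuousOn.intervalIntegrable
    apply hβ.mono
    rw [Set.uIcc_of_le ht.1]
    exact Set.Icc_subset_Icc le_rfl ht.2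
  -- continuity of ψ on Icc
  have hvcont : ContinuousOn v (Set.Icc t0 T) := by
    apply continuousOn_const.add
    rw [show Set.Icc t0 T = Set.uIcc t0 T from (Set.uIcc_of_le hT).symm]
    apply intervalIntegral.continuousOn_primitive_interval
    rw [Set.uIcc_of_le hT]
    exact hfc.integrableOn_compact isCompact_Icc
  have hGtcont : Continuous Gt := by
    have : ∀ x : ℝ, HasDerivAt Gt (h x) x := fun x =>
      integral_hasDerivAt_right (hhc.intervalIntegrable _ _)
        (hhc.stronglyMeasurableAtFilter _ _) hhc.continuousAt
    exact (fun x => (this x).differentiableAt) |> Differentiable.continuous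
  have hψcont : ContinuousOn ψ (Set.Icc t0 T) := by
    apply ContinuousOn.sub
    · rw [show Set.Icc t0 T = Set.uIcc t0 T from (Set.uIcc_of_le hT).symm]
      apply intervalIntegral.continuousOn_primitive_interval
      rw [Set.uIcc_of_le hT]
      exact hβ.integrableOn_compact isCompact_Icc
    · exact hGtcont.comp_continuousOn hvcont
  -- derivative facts on the interior
  have hder : ∀ t ∈ Set.Ioo t0 T, HasDerivAt ψ (β t - h (v t) * f t) t := by
    intro t ht
    have htIcc : t ∈ Set.Icc t0 T := Set.Ioo_subset_Icc_self ht
    have hnhds : Set.Icc t0 T ∈ nhds t := Icc_mem_nhds ht.1 ht.2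
    have hβat : ContinuousAt β t := hβ.continuousAt hnhds
    have hfat : ContinuousAt f t := hfc.continuousAt hnhds
    have hmeasβ := ContinuousOn.stronglyMeasurableAtFilter (μ := MeasureTheory.volume)
      isOpen_Ioo (hβ.mono Set.Ioo_subset_Icc_self) t ht
    have hmeasf := ContinuousOn.stronglyMeasurableAtFilter (μ := MeasureTheory.volume)
      isOpen_Ioo (hfc.mono Set.Ioo_subset_Icc_self) t ht
    have hB : HasDerivAt (fun t => ∫ s in t0..t, β s) (β t) t :=
      integral_hasDerivAt_right (hβint t htIcc) hmeasβ hβat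
    have hF : HasDerivAt v (f t) t := by
      have : HasDerivAt (fun t => ∫ s in t0..t, f s) (f t) t :=
        integral_hasDerivAt_right (hfint t htIcc) hmeasf hfat
      simpa [hv] using this.const_add c
    have hG : HasDerivAt Gt (h (v t)) (v t) :=
      integral_hasDerivAt_right (hhc.intervalIntegrable _ _)
        (hhc.stronglyMeasurableAtFilter _ _) hhc.continuousAt
    exact hB.sub (hG.comp t hF)
  have hψmono : MonotoneOn ψ (Set.Icc t0 T) := by
    apply monotoneOn_of_deriv_nonneg (convex_Icc t0 T) hψcont
    · intro t ht
      rw [interior_Icc] at ht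
      exact ((hder t ht).differentiableAt).differentiableWithinAt
    · intro t ht
      rw [interior_Icc] at ht
      rw [(hder t ht).deriv]
      have htIcc : t ∈ Set.Icc t0 T := Set.Ioo_subset_Icc_self ht
      have hv0 : (0:ℝ) ≤ v t := hc.trans (hvc t htIcc)
      have hmax : max (v t) 0 = v t := max_eq_left hv0
      have hgle : g (u t) ≤ g (v t) :=
        hg.monotoneOn (hu0 t htIcc) hv0 (huv t htIcc)
      have hgv : 0 < g (v t) := hgpos _ hv0
      have : h (v t) * f t ≤ β t := by
        show (g (v t ⊔ 0))⁻¹ * (β t * g (u t)) ≤ β t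
        rw [hmax, inv_mul_le_iff₀ hgv]
        calc β t * g (u t) ≤ β t * g (v t) :=
              mul_le_mul_of_nonneg_left hgle (hβ0 t htIcc)
          _ = g (v t) * β t := mul_comm _ _
      linarith
  -- conclude
  intro t ht r hcr hGr
  have hGtr : Gt r = ∫ s in t0..t, β s := by
    rw [← hGr]
    apply intervalIntegral.integral_congr
    intro s hs
    rw [Set.uIcc_of_le hcr] at hs
    have : max s 0 = s := max_eq_left (hc.trans hs.1)
    simp [hh, this, one_div]
  have h0 : ψ t0 = 0 := by simp [hψ, hGt, hv]
  have hmono := hψmono (Set.left_mem_Icc.2 hT) ht ht.1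
  rw [h0] at hmono
  have hGtv : Gt (v t) ≤ Gt r := by
    rw [hGtr]
    simpa [hψ, sub_nonneg] using hmono
  have : v t ≤ r := (hGtmono.le_iff_le).1 hGtv
  exact (huv t ht).trans this
end

section
/- (Anisotropic product estimate with vertical derivative) Let $G\subset\mathbb{R}^2$ be a bounded Lipschitz domain and $\mathcal{M}=G\times(p_0,p_1)$. There exists a constant $C>0$ such that for all $f,g\in L^2(p_0,p_1;H_0^1(G))$ and $h\in H^1(p_0,p_1;L^2(G))$, $$\int_{\mathcal{M}}|f||g||h|\,d\mathcal{M}\le C\|\nabla f\|_{L^2}^{1/2}\|f\|_{L^2}^{1/2}\|\nabla g\|_{L^2}^{1/2}\|g\|_{L^2}^{1/2}\big(\|h\|_{L^2}^{1/2}\|\partial_p h\|_{L^2}^{1/2}+\|h\|_{L^2}\big),$$ where $\nabla$ is the horizontal gradient. -/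
/-!
On each slice `G × {p}`, Hölder's inequality with exponents `4, 4, 2` bounds `∫_G |f| |g| |h|` by
`‖f(p)‖_{L⁴} ‖g(p)‖_{L⁴} ‖h(p)‖_{L²}`. The two-dimensional Ladyzhenskaya inequality
`‖u‖_{L⁴}⁴ ≤ 2 ‖u‖_{L²}² ‖∇u‖_{L²}²`, which comes from `u(x, y)² ≤ ∫ |∂ₜ u²|` along both coordinate
lines through `(x, y)`, together with Cauchy–Schwarz in `p`, bounds `∫ ‖f(p)‖_{L⁴} ‖g(p)‖_{L⁴} dp`
by the `f`- and `g`-factors. The factor `‖h(p)‖_{L²}` is bounded uniformly in `p` by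
`‖h‖² / (p₁ - p₀) + 2 ‖h‖ ‖∂ₚ h‖`, by averaging `h(p)² ≤ h(q)² + ∫ |∂ₚ h²|` over `q ∈ (p₀, p₁)`.
-/

open MeasureTheory

/-- The `L²` norm of a function over a subset of `(ℝ × ℝ) × ℝ`. -/
noncomputable def L2normOn (M : Set ((ℝ × ℝ) × ℝ)) (f : ((ℝ × ℝ) × ℝ) → ℝ) : ℝ :=
  Real.sqrt (∫ z in M, (f z) ^ 2)

/-- The `L²` norm of the horizontal gradient over a subset of `(ℝ × ℝ) × ℝ`. -/
noncomputable def gradHnormOn (M : Set ((ℝ × ℝ) × ℝ)) (f : ((ℝ × ℝ) × ℝ) → ℝ) : ℝ :=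
  Real.sqrt (∫ z in M,
    ((fderiv ℝ f z ((1, 0), 0)) ^ 2 + (fderiv ℝ f z ((0, 1), 0)) ^ 2))

/-- The `L²` norm of the vertical derivative over a subset of `(ℝ × ℝ) × ℝ`. -/
noncomputable def vertDnormOn (M : Set ((ℝ × ℝ) × ℝ)) (f : ((ℝ × ℝ) × ℝ) → ℝ) : ℝ :=
  Real.sqrt (∫ z in M, (fderiv ℝ f z ((0, 0), 1)) ^ 2)

open Set Filter Bornology Topology

section CauchySchwarz

variable {α : Type*} [MeasurableSpace α] {μ : Measure α}

theorem integral_abs_mul_abs_le {u v : α → ℝ} (hu : AEStronglyMeasurable u μ)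
    (hv : AEStronglyMeasurable v μ) (hu2 : Integrable (fun x => u x ^ 2) μ)
    (hv2 : Integrable (fun x => v x ^ 2) μ) :
    ∫ x, |u x| * |v x| ∂μ ≤ √(∫ x, u x ^ 2 ∂μ) * √(∫ x, v x ^ 2 ∂μ) := by
  have hL2 : ∀ {w : α → ℝ}, AEStronglyMeasurable w μ → Integrable (fun x => w x ^ 2) μ →
      MemLp (fun x => |w x|) (ENNReal.ofReal 2) μ := fun hw hw2 => by
    simpa using ((memLp_two_iff_integrable_sq hw).2 hw2).norm
  have hsq : ∀ w : α → ℝ, ∫ x, |w x| ^ (2 : ℝ) ∂μ = ∫ x, w x ^ 2 ∂μ := fun w => by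
    simp_rw [Real.rpow_two, sq_abs]
  have := integral_mul_le_Lp_mul_Lq_of_nonneg Real.HolderConjugate.two_two
    (ae_of_all _ fun x => abs_nonneg (u x)) (ae_of_all _ fun x => abs_nonneg (v x))
    (hL2 hu hu2) (hL2 hv hv2)
  rwa [hsq, hsq, ← Real.sqrt_eq_rpow, ← Real.sqrt_eq_rpow] at this

theorem integral_sqrt_mul_sqrt_le {w₁ w₂ : α → ℝ} (h₁ : Integrable w₁ μ) (h₂ : Integrable w₂ μ)
    (h₁0 : ∀ x, 0 ≤ w₁ x) (h₂0 : ∀ x, 0 ≤ w₂ x) :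
    ∫ x, √(w₁ x) * √(w₂ x) ∂μ ≤ √(∫ x, w₁ x ∂μ) * √(∫ x, w₂ x ∂μ) := by
  have h := integral_abs_mul_abs_le (Real.continuous_sqrt.comp_aestronglyMeasurable h₁.1)
    (Real.continuous_sqrt.comp_aestronglyMeasurable h₂.1)
    (h₁.congr (ae_of_all _ fun x => (Real.sq_sqrt (h₁0 x)).symm))
    (h₂.congr (ae_of_all _ fun x => (Real.sq_sqrt (h₂0 x)).symm))
  simpa only [abs_of_nonneg (Real.sqrt_nonneg _), Real.sq_sqrt (h₁0 _),
    Real.sq_sqrt (h₂0 _)] using h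

theorem MeasureTheory.Integrable.sqrt_mul_sqrt {w₁ w₂ : α → ℝ} (h₁ : Integrable w₁ μ)
    (h₂ : Integrable w₂ μ) (h₁0 : ∀ x, 0 ≤ w₁ x) (h₂0 : ∀ x, 0 ≤ w₂ x) :
    Integrable (fun x => √(w₁ x) * √(w₂ x)) μ := by
  refine ((h₁.add h₂).div_const 2).mono'
    ((Real.continuous_sqrt.comp_aestronglyMeasurable h₁.1).mul
      (Real.continuous_sqrt.comp_aestronglyMeasurable h₂.1)) (ae_of_all _ fun x => ?_)
  simp only [Pi.add_apply]
  rw [Real.norm_of_nonneg (by positivity)]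
  nlinarith [Real.sq_sqrt (h₁0 x), Real.sq_sqrt (h₂0 x), sq_nonneg (√(w₁ x) - √(w₂ x))]

theorem MeasureTheory.Integrable.sqrt [IsFiniteMeasure μ] {w : α → ℝ} (hw : Integrable w μ)
    (h0 : ∀ x, 0 ≤ w x) : Integrable (fun x => √(w x)) μ := by
  simpa using hw.sqrt_mul_sqrt (integrable_const 1) h0 fun _ => zero_le_one

theorem integral_abs_mul_abs_mul_abs_le {u v w : α → ℝ} (hu : AEStronglyMeasurable u μ)
    (hv : AEStronglyMeasurable v μ) (hw : AEStronglyMeasurable w μ)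
    (hu4 : Integrable (fun x => u x ^ 4) μ) (hv4 : Integrable (fun x => v x ^ 4) μ)
    (hw2 : Integrable (fun x => w x ^ 2) μ) :
    ∫ x, |u x| * |v x| * |w x| ∂μ ≤
      √(√(∫ x, u x ^ 4 ∂μ)) * √(√(∫ x, v x ^ 4 ∂μ)) * √(∫ x, w x ^ 2 ∂μ) := by
  have hpow : ∀ u : α → ℝ, (fun x => (u x ^ 2) ^ 2) = fun x => u x ^ 4 := fun u => by
    ext x; ring
  have huv2 : Integrable (fun x => (u x * v x) ^ 2) μ := by
    refine ((hu4.add hv4).div_const 2).mono' ((hu.mul hv).pow 2) (ae_of_all _ fun x => ?_)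
    simp only [Pi.add_apply]
    rw [Real.norm_of_nonneg (sq_nonneg _)]
    nlinarith [sq_nonneg (u x ^ 2 - v x ^ 2)]
  have huv : ∫ x, (u x * v x) ^ 2 ∂μ ≤ √(∫ x, u x ^ 4 ∂μ) * √(∫ x, v x ^ 4 ∂μ) := by
    have h := integral_abs_mul_abs_le (u := fun x => u x ^ 2) (v := fun x => v x ^ 2)
      (hu.pow 2) (hv.pow 2) (by rwa [hpow]) (by rwa [hpow])
    simpa only [hpow, abs_pow, sq_abs, ← mul_pow] using h
  calc ∫ x, |u x| * |v x| * |w x| ∂μ = ∫ x, |u x * v x| * |w x| ∂μ := by simp_rw [abs_mul]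
    _ ≤ √(∫ x, (u x * v x) ^ 2 ∂μ) * √(∫ x, w x ^ 2 ∂μ) :=
      integral_abs_mul_abs_le (hu.mul hv) hw huv2 hw2
    _ ≤ √(√(∫ x, u x ^ 4 ∂μ) * √(∫ x, v x ^ 4 ∂μ)) * √(∫ x, w x ^ 2 ∂μ) := by gcongr
    _ = _ := by rw [Real.sqrt_mul (Real.sqrt_nonneg _)]

end CauchySchwarz

theorem Continuous.integrableOn_of_isBounded {X E : Type*} [MetricSpace X] [ProperSpace X]
    [MeasurableSpace X] [OpensMeasurableSpace X] [NormedAddCommGroup E] {μ : Measure X}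
    [IsFiniteMeasureOnCompacts μ] {f : X → E} (hf : Continuous f) {s : Set X}
    (hs : IsBounded s) : IntegrableOn f s μ :=
  (hf.continuousOn.integrableOn_compact hs.isCompact_closure).mono_set subset_closure

theorem HasCompactSupport.comp_prodMk_left {X Y M : Type*} [TopologicalSpace X] [R1Space X]
    [TopologicalSpace Y] [Zero M] {u : X × Y → M} (hu : HasCompactSupport u) (y : Y) :
    HasCompactSupport fun x => u (x, y) :=
  .intro (hu.isCompact.image continuous_fst) fun _ hx =>
    image_eq_zero_of_notMem_tsupport fun h => hx ⟨_, h, rfl⟩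

theorem HasCompactSupport.comp_prodMk_right {X Y M : Type*} [TopologicalSpace X]
    [TopologicalSpace Y] [R1Space Y] [Zero M] {u : X × Y → M} (hu : HasCompactSupport u) (x : X) :
    HasCompactSupport fun y => u (x, y) :=
  .intro (hu.isCompact.image continuous_snd) fun _ hy =>
    image_eq_zero_of_notMem_tsupport fun h => hy ⟨_, h, rfl⟩

theorem sq_le_two_mul_integral_abs_mul_abs_deriv {v v' : ℝ → ℝ}
    (hv : ∀ t, HasDerivAt v (v' t) t) (hv' : Continuous v') (hc : HasCompactSupport v) (x : ℝ) :
    v x ^ 2 ≤ 2 * ∫ t, |v t| * |v' t| := by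
  have hderiv : ∀ t, HasDerivAt (fun t => v t ^ 2) (2 * v t * v' t) t := fun t => by
    simpa using (hv t).fun_pow 2
  have hcont : Continuous fun t => 2 * v t * v' t :=
    (continuous_const.mul (continuous_iff_continuousAt.2 fun t => (hv t).continuousAt)).mul hv'
  have hint : Integrable fun t => 2 * v t * v' t :=
    hcont.integrable_of_hasCompactSupport (hc.mul_left.mul_right)
  have hlim : Tendsto (fun t => v t ^ 2) atBot (𝓝 0) := by
    simpa using (hc.is_zero_at_infty.mono_left atBot_le_cocompact).pow 2
  have hftc := integral_Iic_of_hasDerivAt_of_tendsto' (a := x) (fun t _ => hderiv t)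
    hint.integrableOn hlim
  calc v x ^ 2 = ∫ t in Iic x, 2 * v t * v' t := by rw [hftc, sub_zero]
    _ ≤ ∫ t in Iic x, |2 * v t * v' t| := integral_mono hint.integrableOn hint.abs.integrableOn
          fun t => le_abs_self _
    _ ≤ ∫ t, |2 * v t * v' t| :=
          setIntegral_le_integral hint.abs (ae_of_all _ fun t => abs_nonneg _)
    _ = 2 * ∫ t, |v t| * |v' t| := by simp_rw [abs_mul, abs_two, mul_assoc, integral_const_mul]

theorem integral_pow_four_le_four_mul {u d₁ d₂ : ℝ × ℝ → ℝ} (hu : Continuous u)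
    (hcs : HasCompactSupport u) (hd₁ : Continuous d₁) (hd₂ : Continuous d₂)
    (h₁ : ∀ x y, HasDerivAt (fun t => u (t, y)) (d₁ (x, y)) x)
    (h₂ : ∀ x y, HasDerivAt (fun s => u (x, s)) (d₂ (x, y)) y) :
    ∫ z, u z ^ 4 ≤ 4 * (∫ z, |u z| * |d₁ z|) * ∫ z, |u z| * |d₂ z| := by
  set F : ℝ → ℝ := fun y => ∫ t, |u (t, y)| * |d₁ (t, y)|
  set B : ℝ → ℝ := fun x => ∫ s, |u (x, s)| * |d₂ (x, s)|
  have hF : ∀ x y, u (x, y) ^ 2 ≤ 2 * F y := fun x y =>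
    sq_le_two_mul_integral_abs_mul_abs_deriv (fun t => h₁ t y)
      (hd₁.comp (Continuous.prodMk_left y)) (hcs.comp_prodMk_left y) x
  have hB : ∀ x y, u (x, y) ^ 2 ≤ 2 * B x := fun x y =>
    sq_le_two_mul_integral_abs_mul_abs_deriv (fun s => h₂ x s)
      (hd₂.comp (Continuous.prodMk_right x)) (hcs.comp_prodMk_right x) y
  have hφ : ∀ {d : ℝ × ℝ → ℝ}, Continuous d →
      Integrable (fun z => |u z| * |d z|) (volume.prod volume) := fun hd =>
    (hu.abs.mul hd.abs).integrable_of_hasCompactSupport hcs.abs.mul_right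
  have hB0 : ∀ x, 0 ≤ B x := fun x => integral_nonneg fun s => by positivity
  calc ∫ z, u z ^ 4 ≤ ∫ z : ℝ × ℝ, 2 * B z.1 * (2 * F z.2) := by
        refine integral_mono_of_nonneg (ae_of_all _ fun z => by positivity) ?_
          (ae_of_all _ fun ⟨x, y⟩ => ?_)
        · exact ((hφ hd₂).integral_prod_left.const_mul 2).mul_prod
            ((hφ hd₁).integral_prod_right.const_mul 2)
        · calc u (x, y) ^ 4 = u (x, y) ^ 2 * u (x, y) ^ 2 := by ring
            _ ≤ 2 * B x * (2 * F y) :=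
                mul_le_mul (hB x y) (hF x y) (sq_nonneg _) (by linarith [hB0 x])
    _ = 4 * (∫ z, |u z| * |d₁ z|) * ∫ z, |u z| * |d₂ z| := by
        rw [Measure.volume_eq_prod, integral_prod_mul (fun x => 2 * B x) (fun y => 2 * F y),
          integral_const_mul, integral_const_mul, integral_prod _ (hφ hd₂),
          integral_prod_symm _ (hφ hd₁)]
        ring

theorem setIntegral_pow_four_le {u d₁ d₂ : ℝ × ℝ → ℝ} {s : Set (ℝ × ℝ)} (hs : IsBounded s)
    (hu : Continuous u) (hd₁ : Continuous d₁) (hd₂ : Continuous d₂) (hu0 : ∀ z ∉ s, u z = 0)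
    (h₁ : ∀ x y, HasDerivAt (fun t => u (t, y)) (d₁ (x, y)) x)
    (h₂ : ∀ x y, HasDerivAt (fun s => u (x, s)) (d₂ (x, y)) y) :
    ∫ z in s, u z ^ 4 ≤ 2 * (∫ z in s, u z ^ 2) * ∫ z in s, (d₁ z ^ 2 + d₂ z ^ 2) := by
  have hcs : HasCompactSupport u :=
    .intro hs.isCompact_closure fun z hz => hu0 z fun h => hz (subset_closure h)
  have hrestr : ∀ {φ : ℝ × ℝ → ℝ}, (∀ z, u z = 0 → φ z = 0) → ∫ z in s, φ z = ∫ z, φ z :=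
    fun hφ => setIntegral_eq_integral_of_forall_compl_eq_zero fun z hz => hφ z (hu0 z hz)
  have hL := integral_pow_four_le_four_mul hu hcs hd₁ hd₂ h₁ h₂
  rw [← hrestr fun z hz => by simp [hz], ← hrestr fun z hz => by simp [hz],
    ← hrestr fun z hz => by simp [hz]] at hL
  have hsq : ∀ {φ : ℝ × ℝ → ℝ}, Continuous φ → IntegrableOn (fun z => φ z ^ 2) s :=
    fun hφ => (hφ.pow 2).integrableOn_of_isBounded hs
  have hCS : ∀ {d : ℝ × ℝ → ℝ}, Continuous d →
      ∫ z in s, |u z| * |d z| ≤ √(∫ z in s, u z ^ 2) * √(∫ z in s, d z ^ 2) := fun hd =>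
    integral_abs_mul_abs_le hu.aestronglyMeasurable hd.aestronglyMeasurable (hsq hu) (hsq hd)
  set U := ∫ z in s, u z ^ 2
  set D₁ := ∫ z in s, d₁ z ^ 2
  set D₂ := ∫ z in s, d₂ z ^ 2
  have hU : 0 ≤ U := integral_nonneg fun z => sq_nonneg _
  have hD₁ : 0 ≤ D₁ := integral_nonneg fun z => sq_nonneg _
  have hD₂ : 0 ≤ D₂ := integral_nonneg fun z => sq_nonneg _
  calc ∫ z in s, u z ^ 4
      ≤ 4 * (∫ z in s, |u z| * |d₁ z|) * ∫ z in s, |u z| * |d₂ z| := hL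
    _ ≤ 4 * (√U * √D₁) * (√U * √D₂) := by
        gcongr
        exacts [hCS hd₁, hCS hd₂]
    _ = 4 * U * (√D₁ * √D₂) := by linear_combination 4 * √D₁ * √D₂ * Real.mul_self_sqrt hU
    _ ≤ 4 * U * ((D₁ + D₂) / 2) := by
        gcongr
        nlinarith [Real.sq_sqrt hD₁, Real.sq_sqrt hD₂, sq_nonneg (√D₁ - √D₂)]
    _ = 2 * U * ∫ z in s, (d₁ z ^ 2 + d₂ z ^ 2) := by
        rw [integral_add (hsq hd₁) (hsq hd₂)]; ring

theorem sq_le_integral_sq_div_add {v v' : ℝ → ℝ} (hv : ∀ t, HasDerivAt v (v' t) t)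
    (hv' : Continuous v') {a b p : ℝ} (hab : a < b) (hp : p ∈ Icc a b) :
    v p ^ 2 ≤ (∫ t in Ioo a b, v t ^ 2) / (b - a) + 2 * ∫ t in Ioo a b, |v t| * |v' t| := by
  set K := ∫ t in Ioo a b, |v t| * |v' t|
  have hvc : Continuous v := continuous_iff_continuousAt.2 fun t => (hv t).continuousAt
  have hF : Continuous fun t => 2 * v t * v' t := (continuous_const.mul hvc).mul hv'
  have hstep : ∀ q ∈ Ioo a b, v p ^ 2 ≤ v q ^ 2 + 2 * K := fun q hq => by
    have hftc : ∫ t in q..p, 2 * v t * v' t = v p ^ 2 - v q ^ 2 :=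
      intervalIntegral.integral_eq_sub_of_hasDerivAt
        (fun t _ => by simpa using (hv t).fun_pow 2) (hF.intervalIntegrable _ _)
    have hsub : uIoc q p ⊆ Ioc a b :=
      Ioc_subset_Ioc (le_min hq.1.le hp.1) (max_le hq.2.le hp.2)
    have hK : ∫ t in Ioc a b, ‖2 * v t * v' t‖ = 2 * K := by
      simp_rw [Real.norm_eq_abs, abs_mul, abs_two, mul_assoc, integral_const_mul,
        integral_Ioc_eq_integral_Ioo]
      rfl
    have := (le_abs_self _).trans ((intervalIntegral.norm_integral_le_integral_norm_uIoc
      (f := fun t => 2 * v t * v' t)).trans (setIntegral_mono_set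
        (hF.norm.integrableOn_of_isBounded (μ := volume) (Metric.isBounded_Ioc a b))
        (ae_of_all _ fun t => norm_nonneg _) hsub.eventuallyLE))
    rw [hftc, hK] at this
    linarith
  have hsq : IntegrableOn (fun t => v t ^ 2) (Ioo a b) :=
    (hvc.pow 2).integrableOn_of_isBounded (Metric.isBounded_Ioo a b)
  have hconst : ∀ c : ℝ, IntegrableOn (fun _ => c) (Ioo a b) := fun c =>
    integrableOn_const (by simp)
  have hav := setIntegral_mono_on (hconst _) (hsq.add (hconst _)) measurableSet_Ioo hstep
  rw [Pi.add_def, integral_add hsq (hconst _), setIntegral_const, setIntegral_const,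
    Real.volume_real_Ioo_of_le hab.le, smul_eq_mul, smul_eq_mul] at hav
  rw [div_add' _ _ _ (sub_pos.2 hab).ne', le_div_iff₀ (sub_pos.2 hab)]
  linarith

theorem setIntegral_prod_symm {α β E : Type*} [MeasurableSpace α] [MeasurableSpace β]
    [NormedAddCommGroup E] [NormedSpace ℝ E] {μ : Measure α} {ν : Measure β} [SFinite μ]
    [SFinite ν] (f : α × β → E) {s : Set α} {t : Set β}
    (hf : IntegrableOn f (s ×ˢ t) (μ.prod ν)) :
    ∫ z in s ×ˢ t, f z ∂μ.prod ν = ∫ y in t, ∫ x in s, f (x, y) ∂μ ∂ν := by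
  simp only [← Measure.prod_restrict s t, IntegrableOn] at hf ⊢
  exact integral_prod_symm f hf

section Cylinder

variable {G : Set (ℝ × ℝ)} {a b : ℝ}

theorem Continuous.integrableOn_cylinder (hG : IsBounded G) {F : (ℝ × ℝ) × ℝ → ℝ}
    (hF : Continuous F) : IntegrableOn F (G ×ˢ Ioo a b) :=
  hF.integrableOn_of_isBounded (hG.prod (Metric.isBounded_Ioo a b))

theorem Continuous.integrableOn_horizontalIntegral (hG : IsBounded G) {F : (ℝ × ℝ) × ℝ → ℝ}
    (hF : Continuous F) : IntegrableOn (fun p => ∫ x in G, F (x, p)) (Ioo a b) := by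
  have h := hF.integrableOn_cylinder (a := a) (b := b) hG
  rw [IntegrableOn, Measure.volume_eq_prod, ← Measure.prod_restrict] at h
  exact h.integral_prod_right

theorem setIntegral_cylinder_eq_integral_horizontal (hG : IsBounded G) {F : (ℝ × ℝ) × ℝ → ℝ}
    (hF : Continuous F) :
    ∫ z in G ×ˢ Ioo a b, F z = ∫ p in Ioo a b, ∫ x in G, F (x, p) := by
  have h := hF.integrableOn_cylinder (a := a) (b := b) hG
  rw [Measure.volume_eq_prod] at h ⊢
  exact setIntegral_prod_symm F h

theorem Continuous.integrableOn_verticalIntegral (hG : IsBounded G) {F : (ℝ × ℝ) × ℝ → ℝ}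
    (hF : Continuous F) : IntegrableOn (fun x => ∫ t in Ioo a b, F (x, t)) G := by
  have h := hF.integrableOn_cylinder (a := a) (b := b) hG
  rw [IntegrableOn, Measure.volume_eq_prod, ← Measure.prod_restrict] at h
  exact h.integral_prod_left

theorem setIntegral_cylinder_eq_integral_vertical (hG : IsBounded G) {F : (ℝ × ℝ) × ℝ → ℝ}
    (hF : Continuous F) : ∫ z in G ×ˢ Ioo a b, F z = ∫ x in G, ∫ t in Ioo a b, F (x, t) := by
  have h := hF.integrableOn_cylinder (a := a) (b := b) hG
  rw [Measure.volume_eq_prod] at h ⊢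
  exact setIntegral_prod F h

theorem continuous_fderiv_apply_of_contDiff {u : (ℝ × ℝ) × ℝ → ℝ} (hu : ContDiff ℝ 1 u)
    (e : (ℝ × ℝ) × ℝ) : Continuous fun z => fderiv ℝ u z e :=
  (hu.continuous_fderiv one_ne_zero).clm_apply continuous_const

theorem setIntegral_slice_pow_four_le (hG : IsBounded G) {u : (ℝ × ℝ) × ℝ → ℝ}
    (hu : ContDiff ℝ 1 u) (hu0 : ∀ x ∉ G, ∀ p, u (x, p) = 0) (p : ℝ) :
    ∫ x in G, u (x, p) ^ 4 ≤ 2 * (∫ x in G, u (x, p) ^ 2) *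
      ∫ x in G, (fderiv ℝ u (x, p) ((1, 0), 0) ^ 2 + fderiv ℝ u (x, p) ((0, 1), 0) ^ 2) := by
  have hslice : Continuous fun x : ℝ × ℝ => (x, p) := Continuous.prodMk_left p
  have hpartial : ∀ z (e : (ℝ × ℝ) × ℝ) (γ : ℝ → (ℝ × ℝ) × ℝ) (t : ℝ), γ t = z →
      HasDerivAt γ e t → HasDerivAt (fun t => u (γ t)) (fderiv ℝ u z e) t := by
    rintro z e γ t rfl hγ
    exact (hu.differentiable one_ne_zero _).hasFDerivAt.comp_hasDerivAt t hγ
  refine setIntegral_pow_four_le hG (hu.continuous.comp hslice)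
    ((continuous_fderiv_apply_of_contDiff hu _).comp hslice)
    ((continuous_fderiv_apply_of_contDiff hu _).comp hslice) (fun x hx => hu0 x hx p)
    (fun x y => hpartial _ _ (fun t => ((t, y), p)) x rfl ?_)
    (fun x y => hpartial _ _ (fun s => ((x, s), p)) y rfl ?_)
  · exact ((hasDerivAt_id x).prodMk (hasDerivAt_const x y)).prodMk (hasDerivAt_const x p)
  · exact ((hasDerivAt_const y x).prodMk (hasDerivAt_id y)).prodMk (hasDerivAt_const y p)

theorem sqrt_integral_sqrt_slice_pow_four_le (hG : IsBounded G) {u : (ℝ × ℝ) × ℝ → ℝ}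
    (hu : ContDiff ℝ 1 u) (hu0 : ∀ x ∉ G, ∀ p, u (x, p) = 0) :
    √(∫ p in Ioo a b, √(∫ x in G, u (x, p) ^ 4)) ≤ √(√2) * (√(√(∫ z in G ×ˢ Ioo a b, u z ^ 2)) *
      √(√(∫ z in G ×ˢ Ioo a b,
        (fderiv ℝ u z ((1, 0), 0) ^ 2 + fderiv ℝ u z ((0, 1), 0) ^ 2)))) := by
  have hcS : Continuous fun z => u z ^ 2 := hu.continuous.pow 2
  have hcQ : Continuous fun z => fderiv ℝ u z ((1, 0), 0) ^ 2 + fderiv ℝ u z ((0, 1), 0) ^ 2 :=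
    ((continuous_fderiv_apply_of_contDiff hu _).pow 2).add
      ((continuous_fderiv_apply_of_contDiff hu _).pow 2)
  have hS := hcS.integrableOn_horizontalIntegral (a := a) (b := b) hG
  have hQ := hcQ.integrableOn_horizontalIntegral (a := a) (b := b) hG
  have hpt : ∀ p, √(∫ x in G, u (x, p) ^ 4) ≤ √2 * (√(∫ x in G, u (x, p) ^ 2) *
      √(∫ x in G, (fderiv ℝ u (x, p) ((1, 0), 0) ^ 2 + fderiv ℝ u (x, p) ((0, 1), 0) ^ 2))) :=
    fun p => by
      rw [← Real.sqrt_mul (integral_nonneg fun x => sq_nonneg _), ← Real.sqrt_mul zero_le_two,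
        ← mul_assoc]
      exact Real.sqrt_le_sqrt (setIntegral_slice_pow_four_le hG hu hu0 p)
  rw [← Real.sqrt_mul (Real.sqrt_nonneg _), ← Real.sqrt_mul (Real.sqrt_nonneg _)]
  refine Real.sqrt_le_sqrt ?_
  calc ∫ p in Ioo a b, √(∫ x in G, u (x, p) ^ 4)
      ≤ ∫ p in Ioo a b, √2 * (√(∫ x in G, u (x, p) ^ 2) * √(∫ x in G,
          (fderiv ℝ u (x, p) ((1, 0), 0) ^ 2 + fderiv ℝ u (x, p) ((0, 1), 0) ^ 2))) :=
        integral_mono_of_nonneg (ae_of_all _ fun p => Real.sqrt_nonneg _)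
          ((hS.sqrt_mul_sqrt hQ (fun p => integral_nonneg fun x => sq_nonneg _)
            (fun p => integral_nonneg fun x => by positivity)).const_mul √2) (ae_of_all _ hpt)
    _ ≤ _ := by
        rw [integral_const_mul, setIntegral_cylinder_eq_integral_horizontal hG hcS,
          setIntegral_cylinder_eq_integral_horizontal hG hcQ]
        gcongr
        exact integral_sqrt_mul_sqrt_le hS hQ (fun p => integral_nonneg fun x => sq_nonneg _)
          (fun p => integral_nonneg fun x => by positivity)

theorem setIntegral_slice_sq_le (hG : IsBounded G) (hab : a < b) {h : (ℝ × ℝ) × ℝ → ℝ}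
    (hh : ContDiff ℝ 1 h) {p : ℝ} (hp : p ∈ Icc a b) :
    ∫ x in G, h (x, p) ^ 2 ≤ (∫ z in G ×ˢ Ioo a b, h z ^ 2) / (b - a) +
      2 * ∫ z in G ×ˢ Ioo a b, |h z| * |fderiv ℝ h z ((0, 0), 1)| := by
  have hc₁ : Continuous fun z => h z ^ 2 := hh.continuous.pow 2
  have hc₂ : Continuous fun z => |h z| * |fderiv ℝ h z ((0, 0), 1)| :=
    hh.continuous.abs.mul (continuous_fderiv_apply_of_contDiff hh _).abs
  have hpt : ∀ x, h (x, p) ^ 2 ≤ (∫ t in Ioo a b, h (x, t) ^ 2) / (b - a) +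
      2 * ∫ t in Ioo a b, |h (x, t)| * |fderiv ℝ h (x, t) ((0, 0), 1)| := fun x =>
    sq_le_integral_sq_div_add
      (fun t => (hh.differentiable one_ne_zero _).hasFDerivAt.comp_hasDerivAt t
        ((hasDerivAt_const t x).prodMk (hasDerivAt_id t)))
      ((continuous_fderiv_apply_of_contDiff hh _).comp (Continuous.prodMk_right x)) hab hp
  have hV₁ := hc₁.integrableOn_verticalIntegral (a := a) (b := b) hG
  have hV₂ := hc₂.integrableOn_verticalIntegral (a := a) (b := b) hG
  calc ∫ x in G, h (x, p) ^ 2 ≤ ∫ x in G, ((∫ t in Ioo a b, h (x, t) ^ 2) / (b - a) +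
        2 * ∫ t in Ioo a b, |h (x, t)| * |fderiv ℝ h (x, t) ((0, 0), 1)|) :=
        integral_mono ((show Continuous fun x : ℝ × ℝ => h (x, p) ^ 2 from
            (hh.continuous.comp (Continuous.prodMk_left p)).pow 2).integrableOn_of_isBounded hG)
          ((hV₁.div_const _).add (hV₂.const_mul 2)) hpt
    _ = _ := by
        rw [integral_add (hV₁.div_const _) (hV₂.const_mul 2), integral_div, integral_const_mul,
          setIntegral_cylinder_eq_integral_vertical hG hc₁,
          setIntegral_cylinder_eq_integral_vertical hG hc₂]

theorem setIntegral_abs_mul_abs_mul_abs_le (hG : IsBounded G) (hab : a < b)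
    {f g h : (ℝ × ℝ) × ℝ → ℝ} (hf : Continuous f) (hg : Continuous g) (hh : ContDiff ℝ 1 h) :
    ∫ z in G ×ˢ Ioo a b, |f z| * |g z| * |h z| ≤
      √(∫ p in Ioo a b, √(∫ x in G, f (x, p) ^ 4)) *
        √(∫ p in Ioo a b, √(∫ x in G, g (x, p) ^ 4)) *
        √((∫ z in G ×ˢ Ioo a b, h z ^ 2) / (b - a) +
          2 * ∫ z in G ×ˢ Ioo a b, |h z| * |fderiv ℝ h z ((0, 0), 1)|) := by
  set c := √((∫ z in G ×ˢ Ioo a b, h z ^ 2) / (b - a) +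
    2 * ∫ z in G ×ˢ Ioo a b, |h z| * |fderiv ℝ h z ((0, 0), 1)|)
  have hslice : ∀ {u : (ℝ × ℝ) × ℝ → ℝ}, Continuous u → ∀ p, Continuous fun x => u (x, p) :=
    fun hu p => hu.comp (Continuous.prodMk_left p)
  have hA : ∀ {u : (ℝ × ℝ) × ℝ → ℝ}, Continuous u →
      IntegrableOn (fun p => √(∫ x in G, u (x, p) ^ 4)) (Ioo a b) := fun {u} hu =>
    Integrable.sqrt ((show Continuous fun z => u z ^ 4 from hu.pow 4)
      |>.integrableOn_horizontalIntegral hG) fun p => integral_nonneg fun x => by positivity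
  have hp : ∀ p ∈ Ioo a b, ∫ x in G, |f (x, p)| * |g (x, p)| * |h (x, p)| ≤
      √(√(∫ x in G, f (x, p) ^ 4)) * √(√(∫ x in G, g (x, p) ^ 4)) * c := fun p hp' => by
    refine (integral_abs_mul_abs_mul_abs_le (hslice hf p).aestronglyMeasurable
      (hslice hg p).aestronglyMeasurable (hslice hh.continuous p).aestronglyMeasurable
      (((hslice hf p).pow 4).integrableOn_of_isBounded hG)
      (((hslice hg p).pow 4).integrableOn_of_isBounded hG)
      (((hslice hh.continuous p).pow 2).integrableOn_of_isBounded hG)).trans ?_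
    gcongr
    exact Real.sqrt_le_sqrt (setIntegral_slice_sq_le hG hab hh (Ioo_subset_Icc_self hp'))
  have hfg := (hA hf).sqrt_mul_sqrt (hA hg) (fun p => Real.sqrt_nonneg _)
    (fun p => Real.sqrt_nonneg _)
  calc ∫ z in G ×ˢ Ioo a b, |f z| * |g z| * |h z|
      = ∫ p in Ioo a b, ∫ x in G, |f (x, p)| * |g (x, p)| * |h (x, p)| :=
        setIntegral_cylinder_eq_integral_horizontal hG
          ((hf.abs.mul hg.abs).mul hh.continuous.abs)
    _ ≤ ∫ p in Ioo a b, √(√(∫ x in G, f (x, p) ^ 4)) * √(√(∫ x in G, g (x, p) ^ 4)) * c :=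
        setIntegral_mono_on (((hf.abs.mul hg.abs).mul hh.continuous.abs)
          |>.integrableOn_horizontalIntegral hG) (hfg.mul_const c) measurableSet_Ioo hp
    _ ≤ _ := by
        rw [integral_mul_const]
        gcongr
        exact integral_sqrt_mul_sqrt_le (hA hf) (hA hg) (fun p => Real.sqrt_nonneg _)
          (fun p => Real.sqrt_nonneg _)

end Cylinder

theorem sqrt_div_add_two_mul_le {S Q K L : ℝ} (hS : 0 ≤ S) (hL : 0 < L)
    (hK : K ≤ √S * √Q) : √(S / L + 2 * K) ≤ (√2 + 1 / √L) * (√(√S) * √(√Q) + √S) := by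
  have hX : √(√S * √Q) = √(√S) * √(√Q) := Real.sqrt_mul (Real.sqrt_nonneg S) _
  have hsplit : √(S / L + 2 * K) ≤ √S / √L + √2 * (√(√S) * √(√Q)) := by
    rw [← hX, ← Real.sqrt_mul zero_le_two, ← Real.sqrt_div hS]
    refine Real.sqrt_le_iff.2 ⟨by positivity, ?_⟩
    nlinarith [Real.sq_sqrt (div_nonneg hS hL.le),
      Real.sq_sqrt (mul_nonneg zero_le_two (mul_nonneg (Real.sqrt_nonneg S) (Real.sqrt_nonneg Q))),
      mul_nonneg (Real.sqrt_nonneg (S / L)) (Real.sqrt_nonneg (2 * (√S * √Q)))]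
  have hexpand : (√2 + 1 / √L) * (√(√S) * √(√Q) + √S) =
      √S / √L + √2 * (√(√S) * √(√Q)) + (√2 * √S + √(√S) * √(√Q) / √L) := by ring
  have hrest : 0 ≤ √2 * √S + √(√S) * √(√Q) / √L := by positivity
  linarith

theorem anisotropic_product_vertical_general (G : Set (ℝ × ℝ))
    (hGb : Bornology.IsBounded G) (p0 p1 : ℝ) (hp01 : p0 < p1) :
    ∃ C > (0:ℝ), ∀ f g h : ((ℝ × ℝ) × ℝ) → ℝ,
      ContDiff ℝ 1 f → ContDiff ℝ 1 g → ContDiff ℝ 1 h →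
      (∀ x : ℝ × ℝ, x ∉ G → ∀ p : ℝ, f (x, p) = 0) →
      (∀ x : ℝ × ℝ, x ∉ G → ∀ p : ℝ, g (x, p) = 0) →
      (∫ z in G ×ˢ Set.Ioo p0 p1, |f z| * |g z| * |h z|) ≤
        C * (gradHnormOn (G ×ˢ Set.Ioo p0 p1) f) ^ ((1:ℝ)/2) *
          (L2normOn (G ×ˢ Set.Ioo p0 p1) f) ^ ((1:ℝ)/2) *
          (gradHnormOn (G ×ˢ Set.Ioo p0 p1) g) ^ ((1:ℝ)/2) *
          (L2normOn (G ×ˢ Set.Ioo p0 p1) g) ^ ((1:ℝ)/2) *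
          ((L2normOn (G ×ˢ Set.Ioo p0 p1) h) ^ ((1:ℝ)/2) *
              (vertDnormOn (G ×ˢ Set.Ioo p0 p1) h) ^ ((1:ℝ)/2)
            + L2normOn (G ×ˢ Set.Ioo p0 p1) h) := by
  refine ⟨√2 * (√2 + 1 / √(p1 - p0)), by positivity, fun f g h hf hg hh hf0 hg0 => ?_⟩
  simp only [L2normOn, gradHnormOn, vertDnormOn, ← Real.sqrt_eq_rpow]
  have hvert : Continuous fun z => fderiv ℝ h z ((0, 0), 1) :=
    continuous_fderiv_apply_of_contDiff hh _
  have hK := integral_abs_mul_abs_le hh.continuous.aestronglyMeasurable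
    hvert.aestronglyMeasurable ((hh.continuous.pow 2).integrableOn_cylinder hGb)
    ((hvert.pow 2).integrableOn_cylinder (a := p0) (b := p1) hGb)
  calc _ ≤ _ := setIntegral_abs_mul_abs_mul_abs_le hGb hp01 hf.continuous hg.continuous hh
    _ ≤ _ := mul_le_mul (mul_le_mul (sqrt_integral_sqrt_slice_pow_four_le hGb hf hf0)
          (sqrt_integral_sqrt_slice_pow_four_le hGb hg hg0) (Real.sqrt_nonneg _) (by positivity))
        (sqrt_div_add_two_mul_le (integral_nonneg fun z => sq_nonneg _) (sub_pos.2 hp01) hK)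
        (Real.sqrt_nonneg _) (by positivity)
    _ = _ := by
      have h2 : √(√2) * √(√2) = √2 := Real.mul_self_sqrt (Real.sqrt_nonneg 2)
      -- abstract `√√2` first, so that rewriting `√2` does not reach inside it
      generalize √(√2) = r at h2 ⊢
      rw [← h2]
      ring

theorem anisotropic_product_vertical (G : Set (ℝ × ℝ)) (hGo : IsOpen G)
    (hGb : Bornology.IsBounded G) (p0 p1 : ℝ) (hp01 : p0 < p1) :
    ∃ C > (0:ℝ), ∀ f g h : ((ℝ × ℝ) × ℝ) → ℝ,
      ContDiff ℝ 1 f → ContDiff ℝ 1 g → ContDiff ℝ 1 h →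
      (∀ x : ℝ × ℝ, x ∉ G → ∀ p : ℝ, f (x, p) = 0) →
      (∀ x : ℝ × ℝ, x ∉ G → ∀ p : ℝ, g (x, p) = 0) →
      (∫ z in G ×ˢ Set.Ioo p0 p1, |f z| * |g z| * |h z|) ≤
        C * (gradHnormOn (G ×ˢ Set.Ioo p0 p1) f) ^ ((1:ℝ)/2) *
          (L2normOn (G ×ˢ Set.Ioo p0 p1) f) ^ ((1:ℝ)/2) *
          (gradHnormOn (G ×ˢ Set.Ioo p0 p1) g) ^ ((1:ℝ)/2) *
          (L2normOn (G ×ˢ Set.Ioo p0 p1) g) ^ ((1:ℝ)/2) *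
          ((L2normOn (G ×ˢ Set.Ioo p0 p1) h) ^ ((1:ℝ)/2) *
              (vertDnormOn (G ×ˢ Set.Ioo p0 p1) h) ^ ((1:ℝ)/2)
            + L2normOn (G ×ˢ Set.Ioo p0 p1) h) :=
  anisotropic_product_vertical_general G hGb p0 p1 hp01
end
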